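/- Let G be a finite multiset of Pauli strings and P a Pauli string. Let c be the number of Q ∈ G (with multiplicity) such that |conf(P,Q)| is odd. Then (|G| - Z_G(P)) / 2 = c, where Z_G(P) = Σ_{A ⊆ supp(P)} (-2)^|A| · |{Q ∈ G : A ⊆ conf(P,Q)}|. -/

import Mathlib

inductive Pauli | I | X | Y | Z
deriving DecidableEq

instance : Fintype Pauli where
  elems := {Pauli.I, Pauli.X, Pauli.Y, Pauli.Z}
  complete := by intro x; cases x <;> simp

def psupp {n : ℕ} (P : Fin n → Pauli) : Finset (Fin n) :=
  Finset.univ.filter fun j => P j ≠ Pauli.I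

def conf {n : ℕ} (P Q : Fin n → Pauli) : Finset (Fin n) :=
  Finset.univ.filter fun j => P j ≠ Pauli.I ∧ Q j ≠ Pauli.I ∧ P j ≠ Q j

/-! Swapping the two sums in `Z_G(P)` leaves, for each `Q ∈ G`, the binomial sum
`∑_{A ⊆ conf(P,Q)} (-2)^|A| = (-1)^|conf(P,Q)|`, which is `1` or `-1` according to the parity
of `|conf(P,Q)|`. Hence `Z_G(P) = |G| - 2c`. -/

open Finset

theorem Finset.sum_powerset_ite_subset {α R : Type*} [DecidableEq α] [CommSemiring R]
    {s t : Finset α} (h : s ⊆ t) (x : R) :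
    ∑ A ∈ t.powerset, (if A ⊆ s then x ^ A.card else 0) = (x + 1) ^ s.card := by
  rw [← sum_filter, ← sum_pow_mul_eq_add_pow x 1 s]
  simp only [one_pow, mul_one]
  congr 1
  ext A
  simp only [mem_filter, mem_powerset]
  exact ⟨And.right, fun hA => ⟨hA.trans h, hA⟩⟩

namespace Multiset

variable {β R : Type*}

theorem natCast_card_filter_eq_sum_map [NonAssocSemiring R] (G : Multiset β) (p : β → Prop)
    [DecidablePred p] :
    ((G.filter p).card : R) = (G.map fun Q => if p Q then 1 else 0).sum := by
  induction G using Multiset.induction_on with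
  | empty => simp
  | cons a G ih => by_cases h : p a <;> simp [h, ih, add_comm]

theorem sum_mul_card_filter_eq_sum_map {ι : Type*} [NonAssocSemiring R] (G : Multiset β)
    (s : Finset ι) (w : ι → R) (p : ι → β → Prop) [∀ i, DecidablePred (p i)] :
    ∑ i ∈ s, w i * (G.filter (p i)).card
      = (G.map fun Q => ∑ i ∈ s, if p i Q then w i else 0).sum := by
  simp_rw [natCast_card_filter_eq_sum_map, ← sum_map_mul_left, mul_ite, mul_one, mul_zero]
  exact sum_map_sum_map _ _

theorem sum_map_neg_one_pow (G : Multiset β) (f : β → ℕ) :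
    (G.map fun Q => (-1 : ℤ) ^ f Q).sum = G.card - 2 * (G.filter fun Q => Odd (f Q)).card := by
  induction G using Multiset.induction_on with
  | empty => simp
  | cons a G ih =>
    rcases Nat.even_or_odd (f a) with h | h
    · simp [h.neg_one_pow, ih, Nat.not_odd_iff_even.2 h]; ring
    · simp [h.neg_one_pow, ih, h]; ring

end Multiset

theorem conf_subset_psupp {n : ℕ} (P Q : Fin n → Pauli) : conf P Q ⊆ psupp P :=
  monotone_filter_right _ fun _ _ h => h.1

theorem anti_count_formula {n : ℕ} (G : Multiset (Fin n → Pauli)) (P : Fin n → Pauli) :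
    ((G.card : ℤ) -
        ∑ A ∈ (psupp P).powerset,
          (-2 : ℤ) ^ A.card * ((G.filter fun Q => A ⊆ conf P Q).card : ℤ)) / 2
      = ((G.filter fun Q => Odd (conf P Q).card).card : ℤ) := by
  have hZ : ∑ A ∈ (psupp P).powerset,
        (-2 : ℤ) ^ A.card * ((G.filter fun Q => A ⊆ conf P Q).card : ℤ)
      = G.card - 2 * (G.filter fun Q => Odd (conf P Q).card).card := by
    rw [Multiset.sum_mul_card_filter_eq_sum_map, ← Multiset.sum_map_neg_one_pow]
    congr 1
    refine Multiset.map_congr rfl fun Q _ => ?_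
    rw [sum_powerset_ite_subset (conf_subset_psupp P Q)]
    norm_num
  rw [hZ, sub_sub_cancel, Int.mul_ediv_cancel_left _ two_ne_zero]
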